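/- Let (U₁, U₂) be a universal commuting pair of operators on a separable infinite-dimensional complex Hilbert space H. Then the intersection Ker(U₁) ∩ Ker(U₂) is infinite-dimensional, and both U₁ and U₂ are universal operators on H. -/

import Mathlib

noncomputable section

/-- Universal operator on a complex Hilbert space. -/
def IsUniversal {H : Type*} [NormedAddCommGroup H] [InnerProductSpace ℂ H]
    (U : H →L[ℂ] H) : Prop :=
  ∀ T : H →L[ℂ] H, ∃ M : Submodule ℂ H, IsClosed (M : Set H) ∧ (∀ x ∈ M, U x ∈ M) ∧
    ∃ c : ℂ, c ≠ 0 ∧ ∃ J : H ≃L[ℂ] M, ∀ x : H, U (J x : H) = c • ((J (T x) : H))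

/-- A commuting pair `(U₁, U₂)` is a *universal commuting pair* if for every commuting pair
`(S₁, S₂)` there are a nonzero `c ∈ ℂ`, a closed subspace `M` invariant under both `U₁` and
`U₂`, and a continuous linear isomorphism `V : H ≃ M` with `Uᵢ (V x) = c • V (Sᵢ x)` for
all `x` and `i = 1, 2`. -/
def IsUniversalPair {H : Type*} [NormedAddCommGroup H] [InnerProductSpace ℂ H]
    (U₁ U₂ : H →L[ℂ] H) : Prop :=
  U₁.comp U₂ = U₂.comp U₁ ∧
  ∀ S₁ S₂ : H →L[ℂ] H, S₁.comp S₂ = S₂.comp S₁ →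
    ∃ M : Submodule ℂ H, IsClosed (M : Set H) ∧
      (∀ x ∈ M, U₁ x ∈ M) ∧ (∀ x ∈ M, U₂ x ∈ M) ∧
      ∃ c : ℂ, c ≠ 0 ∧ ∃ V : H ≃L[ℂ] M,
        (∀ x : H, U₁ (V x : H) = c • ((V (S₁ x) : H))) ∧
        (∀ x : H, U₂ (V x : H) = c • ((V (S₂ x) : H)))

/-
Each conclusion comes from feeding a particular commuting pair to the universality of
`(U₁, U₂)`. The pair `(0, 0)` yields an embedding `V` of `H` with `Uᵢ ∘ V = c • V ∘ 0 = 0`, so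
`H` embeds into `Ker U₁ ∩ Ker U₂`; the pairs `(T, 1)` and `(1, T)` show that `U₁` and `U₂`
are each universal.
-/

namespace IsUniversalPair

variable {H : Type*} [NormedAddCommGroup H] [InnerProductSpace ℂ H] {U₁ U₂ : H →L[ℂ] H}

theorem isUniversal_left (h : IsUniversalPair U₁ U₂) : IsUniversal U₁ := by
  intro T
  obtain ⟨M, hM, hM₁, -, c, hc, V, hV₁, -⟩ := h.2 T 1 (by ext; simp)
  exact ⟨M, hM, hM₁, c, hc, V, hV₁⟩

theorem isUniversal_right (h : IsUniversalPair U₁ U₂) : IsUniversal U₂ := by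
  intro T
  obtain ⟨M, hM, -, hM₂, c, hc, V, -, hV₂⟩ := h.2 1 T (by ext; simp)
  exact ⟨M, hM, hM₂, c, hc, V, hV₂⟩

theorem exists_injective_ker_inf (h : IsUniversalPair U₁ U₂) :
    ∃ f : H →ₗ[ℂ] ↥(LinearMap.ker (U₁ : H →ₗ[ℂ] H) ⊓ LinearMap.ker (U₂ : H →ₗ[ℂ] H)),
      Function.Injective f := by
  obtain ⟨M, -, -, -, c, -, V, hV₁, hV₂⟩ := h.2 0 0 rfl
  have hV_mem : ∀ x, (V x : H) ∈ LinearMap.ker (U₁ : H →ₗ[ℂ] H) ⊓ LinearMap.ker (U₂ : H →ₗ[ℂ] H) :=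
    fun x ↦ ⟨by simp [hV₁ x], by simp [hV₂ x]⟩
  refine ⟨LinearMap.codRestrict _ (M.subtype ∘ₗ (V : H →ₗ[ℂ] M)) hV_mem, fun x y hxy ↦ ?_⟩
  have hVxy := congrArg Subtype.val hxy
  exact V.injective (Subtype.ext hVxy)

end IsUniversalPair

theorem universalPair_necessary_conditions {H : Type*} [NormedAddCommGroup H]
    [InnerProductSpace ℂ H]
    (hinf : ¬ FiniteDimensional ℂ H)
    (U₁ U₂ : H →L[ℂ] H) (h : IsUniversalPair U₁ U₂) :
    ¬ FiniteDimensional ℂ (LinearMap.ker (U₁ : H →ₗ[ℂ] H) ⊓ LinearMap.ker (U₂ : H →ₗ[ℂ] H) : Submodule ℂ H) ∧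
    IsUniversal U₁ ∧ IsUniversal U₂ := by
  obtain ⟨f, hf⟩ := h.exists_injective_ker_inf
  exact ⟨fun _ ↦ hinf (FiniteDimensional.of_injective f hf), h.isUniversal_left,
    h.isUniversal_right⟩

end
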